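/- The map (P.iv) preserves the Poisson bracket: if φ(w0,w1,w2,w3) = (w1,w2,w3,w4) with w4 defined by the (P.iv) relation, then for all pairs of coordinate functions the pullback identity {w_i ∘ φ, w_j ∘ φ} = {w_i, w_j} ∘ φ holds, where the bracket is {w0,w1}={w1,w2}={w2,w3}=0, {w0,w2}=1/w1, {w1,w3}=1/w2, {w0,w3}=−(w0+2*w1+2*w2+w3+ν)/(w1*w2). -/

import Mathlib

/-
Where `w2 * w3 ≠ 0`, `w4` is affine in `w0`, quadratic in `w1`, and of the form `-w3 - c - k / w3`
in `w3`, so its partial derivatives in these variables are explicit; substituting them turns each of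
the sixteen pullback identities into an identity of rational functions. `∂w4/∂w2` never
contributes: in the bracket it is paired only with `∂/∂w0` of a pulled-back coordinate, which
vanishes for `w1, w2, w3` and cancels antisymmetrically for `w4`.
-/

noncomputable def D0 (F : ℝ → ℝ → ℝ → ℝ → ℝ) (w0 w1 w2 w3 : ℝ) : ℝ :=
  deriv (fun t => F t w1 w2 w3) w0
noncomputable def D1 (F : ℝ → ℝ → ℝ → ℝ → ℝ) (w0 w1 w2 w3 : ℝ) : ℝ :=
  deriv (fun t => F w0 t w2 w3) w1
noncomputable def D2 (F : ℝ → ℝ → ℝ → ℝ → ℝ) (w0 w1 w2 w3 : ℝ) : ℝ :=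
  deriv (fun t => F w0 w1 t w3) w2
noncomputable def D3 (F : ℝ → ℝ → ℝ → ℝ → ℝ) (w0 w1 w2 w3 : ℝ) : ℝ :=
  deriv (fun t => F w0 w1 w2 t) w3

noncomputable def pbIv (nu : ℝ) (F G : ℝ → ℝ → ℝ → ℝ → ℝ) (w0 w1 w2 w3 : ℝ) : ℝ :=
  (1 / w1) * (D0 F w0 w1 w2 w3 * D2 G w0 w1 w2 w3 - D2 F w0 w1 w2 w3 * D0 G w0 w1 w2 w3)
  + (1 / w2) * (D1 F w0 w1 w2 w3 * D3 G w0 w1 w2 w3 - D3 F w0 w1 w2 w3 * D1 G w0 w1 w2 w3)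
  + (-(w0 + 2*w1 + 2*w2 + w3 + nu) / (w1 * w2)) * (D0 F w0 w1 w2 w3 * D3 G w0 w1 w2 w3 - D3 F w0 w1 w2 w3 * D0 G w0 w1 w2 w3)

noncomputable def F4 (a b nu w0 w1 w2 w3 : ℝ) : ℝ :=
  -(w0*w1*w2 + w1*w2*w3 + w1^2*w2 + w2*w3^2 + 2*w1*w2^2 + 2*w2^2*w3 + w2^3 + nu*(w1*w2 + w2*w3 + w2^2) + b*w2 + a) / (w2 * w3)

/-- Coordinate functions on ℝ⁴. -/
noncomputable def coord : Fin 4 → (ℝ → ℝ → ℝ → ℝ → ℝ)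
  | 0 => fun x _ _ _ => x
  | 1 => fun _ x _ _ => x
  | 2 => fun _ _ x _ => x
  | 3 => fun _ _ _ x => x

/-- Coordinate functions pulled back by the (P.iv) map φ. -/
noncomputable def coordPhi (a b nu : ℝ) (i : Fin 4) : ℝ → ℝ → ℝ → ℝ → ℝ :=
  fun w0 w1 w2 w3 => coord i w1 w2 w3 (F4 a b nu w0 w1 w2 w3)

section PartialDerivatives

variable {a b nu w0 w1 w2 w3 : ℝ}

lemma hasDerivAt_F4_w0 (h2 : w2 ≠ 0) (h3 : w3 ≠ 0) :
    HasDerivAt (fun t => F4 a b nu t w1 w2 w3) (-w1 / w3) w0 := by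
  have hF4 : ∀ t, F4 a b nu t w1 w2 w3 = -w1 / w3 * t + F4 a b nu 0 w1 w2 w3 := by
    intro t
    simp only [F4]
    field_simp
    ring
  refine ((((hasDerivAt_id w0).const_mul (-w1 / w3)).add_const _).congr_of_eventuallyEq
    (.of_forall hF4)).congr_deriv ?_
  simp

lemma hasDerivAt_F4_w1 (h2 : w2 ≠ 0) (h3 : w3 ≠ 0) :
    HasDerivAt (fun t => F4 a b nu w0 t w2 w3) (-(w0 + 2*w1 + 2*w2 + w3 + nu) / w3) w1 := by
  have hF4 : ∀ t, F4 a b nu w0 t w2 w3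
      = -1 / w3 * t ^ 2 + (-(w0 + 2*w2 + w3 + nu) / w3 * t + F4 a b nu w0 0 w2 w3) := by
    intro t
    simp only [F4]
    field_simp
    ring
  refine ((((hasDerivAt_pow 2 w1).const_mul _).add
    (((hasDerivAt_id w1).const_mul _).add_const _)).congr_of_eventuallyEq
    (.of_forall hF4)).congr_deriv ?_
  field_simp
  ring

lemma hasDerivAt_F4_w3 (h2 : w2 ≠ 0) (h3 : w3 ≠ 0) :
    HasDerivAt (fun t => F4 a b nu w0 w1 w2 t)
      (-(w1 + 2*w2 + 2*w3 + F4 a b nu w0 w1 w2 w3 + nu) / w3) w3 := by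
  set k := (w0*w1*w2 + w1^2*w2 + 2*w1*w2^2 + w2^3 + nu*(w1*w2 + w2^2) + b*w2 + a) / w2
  have hF4 : ∀ t ≠ 0, F4 a b nu w0 w1 w2 t = -t - (w1 + 2*w2 + nu) - k * t⁻¹ := by
    intro t ht
    simp only [F4, k]
    field_simp
    ring
  refine ((((hasDerivAt_id w3).neg.sub_const (w1 + 2*w2 + nu)).sub
    ((hasDerivAt_inv h3).const_mul k)).congr_of_eventuallyEq ?_).congr_deriv ?_
  · filter_upwards [eventually_ne_nhds h3] with t ht using hF4 t ht
  · rw [hF4 w3 h3]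
    field_simp
    ring

end PartialDerivatives

theorem stmt19_general (a b nu w0 w1 w2 w3 : ℝ)
    (h1 : w1 ≠ 0) (h2 : w2 ≠ 0) (h3 : w3 ≠ 0) :
    ∀ i j : Fin 4,
      pbIv nu (coordPhi a b nu i) (coordPhi a b nu j) w0 w1 w2 w3
        = pbIv nu (coord i) (coord j) w1 w2 w3 (F4 a b nu w0 w1 w2 w3) := by
  intro i j
  fin_cases i <;> fin_cases j <;>
    simp only [pbIv, D0, D1, D2, D3, coordPhi, coord, deriv_const, deriv_id'',
      (hasDerivAt_F4_w0 h2 h3).deriv, (hasDerivAt_F4_w1 h2 h3).deriv,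
      (hasDerivAt_F4_w3 h2 h3).deriv] <;>
    field_simp <;> ring

theorem stmt19 (a b nu w0 w1 w2 w3 : ℝ)
    (h1 : w1 ≠ 0) (h2 : w2 ≠ 0) (h3 : w3 ≠ 0)
    (h4 : F4 a b nu w0 w1 w2 w3 ≠ 0) :
    ∀ i j : Fin 4,
      pbIv nu (coordPhi a b nu i) (coordPhi a b nu j) w0 w1 w2 w3
        = pbIv nu (coord i) (coord j) w1 w2 w3 (F4 a b nu w0 w1 w2 w3) :=
  stmt19_general a b nu w0 w1 w2 w3 h1 h2 h3
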